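/- arXiv:1601.06138 — 4 statements merged into one kernel-verified Lean document; each statement's English description precedes it below -/
import Mathlib

section
/- For every ν ≥ 0 the Wronskian d_ν = Wr[h_ν, h_{ν+1}] satisfies the differential equation d_ν'' − (2x + 2 h_ν'/h_ν) d_ν' + 4x (h_ν'/h_ν) d_ν = 0, i.e. h_ν d_ν'' − (2x h_ν + 2 h_ν') d_ν' + 4x h_ν' d_ν = 0 as polynomial identity. -/
/-!
If `f'' = 2x f' - a f` and `g'' = 2x g' - b g`, the Wronskian `W = f g' - f' g` satisfies
`W' = 2x W - (b - a) f g`. Differentiating once more and eliminating `f' g + f g'` with the help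
of `W` shows that `f W'' - (2x f + 2 f') W' + 4x f' W = (2 - (b - a)) f W`, which vanishes for
consecutive Hermite polynomials, where `b - a = 2`.
-/

open Polynomial

/-- The orthonormal Hermite polynomial of degree `n` with respect to the weight
`exp (-x^2)` on `ℝ`: `h n = (2^n * n! * √π)^(-1/2) * H_n`, where `H_n` is the
physicists' Hermite polynomial, obtained from the probabilists' Hermite polynomial
`He_n` (Mathlib's `Polynomial.hermite`) by `H_n x = (√2)^n * He_n (√2 * x)`. -/
noncomputable def orthonormalHermite (n : ℕ) : Polynomial ℝ :=
  Polynomial.C ((Real.sqrt ((2 : ℝ) ^ n * (n.factorial : ℝ) * Real.sqrt Real.pi))⁻¹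
      * (Real.sqrt 2) ^ n) *
    ((Polynomial.hermite n).map (Int.castRingHom ℝ)).comp
      (Polynomial.C (Real.sqrt 2) * Polynomial.X)

/-- The Wronskian `d_ν = h_ν h_{ν+1}' − h_ν' h_{ν+1}` of consecutive orthonormal
Hermite polynomials. -/
noncomputable def hermiteWronskian (ν : ℕ) : Polynomial ℝ :=
  orthonormalHermite ν * (orthonormalHermite (ν + 1)).derivative -
    (orthonormalHermite ν).derivative * orthonormalHermite (ν + 1)

namespace Polynomial

theorem derivative_hermite_succ (n : ℕ) :
    derivative (hermite (n + 1)) = ((n + 1 : ℕ) : ℤ[X]) * hermite n := by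
  induction n with
  | zero => simp
  | succ n ih =>
    rw [hermite_succ (n + 1), derivative_sub, derivative_mul, derivative_X, ih, derivative_mul,
      derivative_natCast, hermite_succ n]
    push_cast
    ring

theorem derivative_derivative_hermite (n : ℕ) :
    derivative (derivative (hermite n)) = X * derivative (hermite n) - (n : ℤ[X]) * hermite n := by
  cases n with
  | zero => simp
  | succ n =>
    rw [derivative_hermite_succ, derivative_mul, derivative_natCast, hermite_succ n]
    push_cast
    ring

variable {R : Type*} [CommRing R]

theorem derivative_derivative_comp_C_mul_X {p : R[X]} {a : R} (s : R)
    (hp : derivative (derivative p) = X * derivative p - C a * p) :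
    derivative (derivative (p.comp (C s * X))) =
      C (s * s) * (X * derivative (p.comp (C s * X)) - C a * p.comp (C s * X)) := by
  simp only [derivative_comp, derivative_mul, derivative_C, derivative_X, zero_mul, zero_add,
    mul_one, hp, sub_comp, mul_comp, X_comp, C_comp, map_mul]
  ring

theorem derivative_wronskian (a b : R[X]) :
    derivative (wronskian a b) =
      a * derivative (derivative b) - derivative (derivative a) * b := by
  rw [wronskian, derivative_sub, derivative_mul, derivative_mul]
  ring

theorem wronskian_ode_of_hermite_ode {f g : R[X]} {a : R}
    (hf : derivative (derivative f) = 2 * X * derivative f - C a * f)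
    (hg : derivative (derivative g) = 2 * X * derivative g - C (a + 2) * g) :
    f * derivative (derivative (wronskian f g)) -
        (2 * X * f + 2 * derivative f) * derivative (wronskian f g) +
        4 * X * derivative f * wronskian f g = 0 := by
  have hW' : derivative (wronskian f g) = 2 * X * wronskian f g - 2 * f * g := by
    rw [derivative_wronskian, hf, hg, map_add, map_ofNat, wronskian]
    ring
  have hW'' : derivative (derivative (wronskian f g)) =
      2 * wronskian f g + 2 * X * derivative (wronskian f g) -
        2 * (derivative f * g + f * derivative g) := by
    conv_lhs => rw [hW']
    simp only [derivative_sub, derivative_mul, derivative_ofNat, derivative_X]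
    ring
  rw [hW'', hW', wronskian]
  ring

end Polynomial

theorem orthonormalHermite_ode (n : ℕ) :
    derivative (derivative (orthonormalHermite n)) =
      2 * X * derivative (orthonormalHermite n) - C (2 * (n : ℝ)) * orthonormalHermite n := by
  have hHe : derivative (derivative ((hermite n).map (Int.castRingHom ℝ))) =
      X * derivative ((hermite n).map (Int.castRingHom ℝ)) -
        C (n : ℝ) * (hermite n).map (Int.castRingHom ℝ) := by
    simp only [derivative_map, derivative_derivative_hermite, Polynomial.map_sub,
      Polynomial.map_mul, Polynomial.map_X, Polynomial.map_natCast, map_natCast]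
  have hH := derivative_derivative_comp_C_mul_X (Real.sqrt 2) hHe
  rw [Real.mul_self_sqrt zero_le_two, map_ofNat] at hH
  rw [orthonormalHermite, derivative_C_mul, derivative_C_mul, hH]
  simp only [map_mul, map_ofNat]
  ring

/-- The Wronskian `d_ν = Wr[h_ν, h_{ν+1}]` satisfies
`d_ν'' − (2x + 2 h_ν'/h_ν) d_ν' + 4x (h_ν'/h_ν) d_ν = 0`, in the polynomial form
`h_ν d_ν'' − (2x h_ν + 2 h_ν') d_ν' + 4x h_ν' d_ν = 0`. -/
theorem hermiteWronskian_ode (ν : ℕ) :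
    orthonormalHermite ν * ((hermiteWronskian ν).derivative).derivative -
        (2 * Polynomial.X * orthonormalHermite ν + 2 * (orthonormalHermite ν).derivative) *
          (hermiteWronskian ν).derivative +
        4 * Polynomial.X * (orthonormalHermite ν).derivative * hermiteWronskian ν = 0 := by
  have hsucc := orthonormalHermite_ode (ν + 1)
  rw [show 2 * ((ν + 1 : ℕ) : ℝ) = 2 * ν + 2 by push_cast; ring] at hsucc
  exact wronskian_ode_of_hermite_ode (orthonormalHermite_ode ν) hsucc
end

section
/- Let A ∈ ℂ^{n×n} be partitioned into blocks A_{ij} according to a direct-sum decomposition ℂ^n = W_1 ⊕ ⋯ ⊕ W_l with norms Φ_j on W_j. If A is strictly block diagonally dominant, i.e. ‖A_{ii}⁻¹‖⁻¹ > ∑_{j≠i} ‖A_{ij}‖ for every i (operator norms with respect to the Φ_j), then A is nonsingular. -/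
/-- Block Gersgorin nonsingularity theorem (Varga): let `ℂ^n = W_1 ⊕ ⋯ ⊕ W_l` be a
direct sum of finite-dimensional normed complex spaces (realized as the product of
the spaces `E i`), and let `A` be given by blocks `A i j : E j →L[ℂ] E i`. If `A`
is strictly block diagonally dominant, i.e. each diagonal block `A i i` has an
inverse `B` with `∑_{j ≠ i} ‖A i j‖ < ‖B‖⁻¹` (so that `‖(A i i)⁻¹‖⁻¹ > ∑_{j ≠ i} ‖A i j‖`),
then `A` is nonsingular. -/
theorem block_diag_dominant_nonsingular {l : ℕ} (E : Fin l → Type*)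
    [∀ i, NormedAddCommGroup (E i)] [∀ i, NormedSpace ℂ (E i)]
    [∀ i, FiniteDimensional ℂ (E i)]
    (A : ∀ i j, E j →L[ℂ] E i)
    (hdom : ∀ i, ∃ B : E i →L[ℂ] E i,
      B.comp (A i i) = ContinuousLinearMap.id ℂ (E i) ∧
      (A i i).comp B = ContinuousLinearMap.id ℂ (E i) ∧
      ∑ j ∈ Finset.univ.erase i, ‖A i j‖ < ‖B‖⁻¹) :
    Function.Bijective (fun v : (∀ i, E i) => fun i => ∑ j, A i j (v j)) := by
  set F : (∀ i, E i) →ₗ[ℂ] (∀ i, E i) :=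
    { toFun := fun v i => ∑ j, A i j (v j)
      map_add' := by
        intro x y; funext i
        simp [map_add, Finset.sum_add_distrib]
      map_smul' := by
        intro c x; funext i
        simp [Finset.smul_sum] } with hF
  have hinj : Function.Injective F := by
    rw [injective_iff_map_eq_zero]
    intro v hv
    by_contra hvne
    have hl : (Finset.univ : Finset (Fin l)).Nonempty := by
      by_contra h
      exact hvne (funext fun j => absurd (Finset.mem_univ j) fun hm => h ⟨j, hm⟩)
    obtain ⟨i, -, hi⟩ := Finset.exists_max_image Finset.univ (fun i => ‖v i‖) hl
    have hvi : 0 < ‖v i‖ := by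
      rcases (norm_nonneg (v i)).lt_or_eq with h | h
      · exact h
      · exact absurd (funext fun j => norm_le_zero_iff.mp (h ▸ hi j (Finset.mem_univ j)))
          hvne
    obtain ⟨B, hB1, hB2, hB3⟩ := hdom i
    have hVi : v i = B (A i i (v i)) := by
      have := congrArg (fun T : E i →L[ℂ] E i => T (v i)) hB1
      simpa using this.symm
    have hsum : ∑ j, A i j (v j) = 0 := congrFun hv i
    have hsplit : A i i (v i) = -∑ j ∈ Finset.univ.erase i, A i j (v j) := by
      rw [← Finset.add_sum_erase Finset.univ (fun j => A i j (v j)) (Finset.mem_univ i)]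
        at hsum
      exact eq_neg_of_add_eq_zero_left hsum
    have hBpos : 0 < ‖B‖ := by
      rcases (norm_nonneg B).lt_or_eq with h | h
      · exact h
      · have hB0 : B = 0 := by rwa [eq_comm, norm_eq_zero] at h
        rw [hB0] at hVi
        simp at hVi
        rw [hVi] at hvi
        simp at hvi
    set S := ∑ j ∈ Finset.univ.erase i, ‖A i j‖ with hS
    have key : ‖v i‖ ≤ ‖B‖ * (S * ‖v i‖) := by
      calc ‖v i‖ = ‖B (A i i (v i))‖ := by rw [← hVi]
        _ ≤ ‖B‖ * ‖A i i (v i)‖ := B.le_opNorm _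
        _ = ‖B‖ * ‖∑ j ∈ Finset.univ.erase i, A i j (v j)‖ := by rw [hsplit, norm_neg]
        _ ≤ ‖B‖ * ∑ j ∈ Finset.univ.erase i, ‖A i j (v j)‖ := by
            gcongr; exact norm_sum_le _ _
        _ ≤ ‖B‖ * ∑ j ∈ Finset.univ.erase i, ‖A i j‖ * ‖v i‖ := by
            gcongr with j hj
            calc ‖A i j (v j)‖ ≤ ‖A i j‖ * ‖v j‖ := (A i j).le_opNorm _
              _ ≤ ‖A i j‖ * ‖v i‖ := by
                  gcongr
                  exact hi j (Finset.mem_univ j)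
        _ = ‖B‖ * (S * ‖v i‖) := by rw [hS, Finset.sum_mul]
    have h1 : ‖B‖ * S < 1 := by
      have := mul_lt_mul_of_pos_left hB3 hBpos
      rwa [mul_inv_cancel₀ hBpos.ne'] at this
    nlinarith [key, h1, hvi]
  exact ⟨hinj, LinearMap.injective_iff_surjective.mp hinj⟩
end

section
/- With the block partition as above, every eigenvalue λ of A lies in the block Gersgorin set ⋃_{i=1}^{l} { z ∈ ℂ : ‖(zI_i − A_{ii})⁻¹‖⁻¹ ≤ ∑_{j≠i} ‖A_{ij}‖ }. -/
/-- Block Gersgorin localization theorem (Varga): with `ℂ^n = W_1 ⊕ ⋯ ⊕ W_l` a direct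
sum of finite-dimensional normed complex spaces (realized as the product of the `E i`)
and `A` given by blocks `A i j : E j →L[ℂ] E i`, every eigenvalue `λ` of `A` lies in
some block Gersgorin set: there is an `i` with `‖(λI_i − A i i)⁻¹‖⁻¹ ≤ ∑_{j ≠ i} ‖A i j‖`
(expressed via any two-sided inverse `B` of `λI_i − A i i`; if none exists the
convention `‖(λI_i − A i i)⁻¹‖⁻¹ = 0` makes the bound vacuous). -/
theorem block_gersgorin_eigenvalue {l : ℕ} (E : Fin l → Type*)
    [∀ i, NormedAddCommGroup (E i)] [∀ i, NormedSpace ℂ (E i)]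
    [∀ i, FiniteDimensional ℂ (E i)]
    (A : ∀ i j, E j →L[ℂ] E i) (lam : ℂ)
    (hev : ∃ v : ∀ i, E i, v ≠ 0 ∧ (fun i => ∑ j, A i j (v j)) = fun i => lam • v i) :
    ∃ i, ∀ B : E i →L[ℂ] E i,
      (B.comp (lam • ContinuousLinearMap.id ℂ (E i) - A i i) = ContinuousLinearMap.id ℂ (E i) ∧
       (lam • ContinuousLinearMap.id ℂ (E i) - A i i).comp B = ContinuousLinearMap.id ℂ (E i)) →
      ‖B‖⁻¹ ≤ ∑ j ∈ Finset.univ.erase i, ‖A i j‖ := by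
  obtain ⟨v, hv0, hv⟩ := hev
  obtain ⟨i₀, hi₀⟩ := Function.ne_iff.mp hv0
  have : Nonempty (Fin l) := ⟨i₀⟩
  obtain ⟨i, -, hi⟩ := Finset.exists_max_image Finset.univ (fun i => ‖v i‖) ⟨i₀, Finset.mem_univ _⟩
  have hvi : 0 < ‖v i‖ := lt_of_lt_of_le (norm_pos_iff.mpr hi₀) (hi i₀ (Finset.mem_univ _))
  refine ⟨i, fun B ⟨hB1, _⟩ => ?_⟩
  have h := congrFun hv i
  have hsplit : ∑ j, A i j (v j) = A i i (v i) + ∑ j ∈ Finset.univ.erase i, A i j (v j) :=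
    (Finset.add_sum_erase _ _ (Finset.mem_univ i)).symm
  have hEq : (lam • ContinuousLinearMap.id ℂ (E i) - A i i) (v i)
      = ∑ j ∈ Finset.univ.erase i, A i j (v j) := by
    rw [hsplit] at h
    simp only [ContinuousLinearMap.sub_apply, ContinuousLinearMap.smul_apply,
      ContinuousLinearMap.id_apply]
    exact sub_eq_of_eq_add' h.symm
  have hvB : v i = B (∑ j ∈ Finset.univ.erase i, A i j (v j)) := by
    have h1 := ContinuousLinearMap.ext_iff.mp hB1 (v i)
    simp only [ContinuousLinearMap.comp_apply, ContinuousLinearMap.id_apply] at h1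
    rw [← h1, hEq]
  set S := ∑ j ∈ Finset.univ.erase i, ‖A i j‖ with hS
  have hS0 : 0 ≤ S := Finset.sum_nonneg fun _ _ => norm_nonneg _
  have key : ‖v i‖ ≤ ‖B‖ * (S * ‖v i‖) := by
    calc ‖v i‖ = ‖B (∑ j ∈ Finset.univ.erase i, A i j (v j))‖ := by rw [← hvB]
    _ ≤ ‖B‖ * ‖∑ j ∈ Finset.univ.erase i, A i j (v j)‖ := B.le_opNorm _
    _ ≤ ‖B‖ * (S * ‖v i‖) := by
        refine mul_le_mul_of_nonneg_left ?_ (norm_nonneg _)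
        calc ‖∑ j ∈ Finset.univ.erase i, A i j (v j)‖
            ≤ ∑ j ∈ Finset.univ.erase i, ‖A i j (v j)‖ := norm_sum_le _ _
          _ ≤ ∑ j ∈ Finset.univ.erase i, ‖A i j‖ * ‖v i‖ := by
              refine Finset.sum_le_sum fun j _ => ?_
              exact le_trans ((A i j).le_opNorm _)
                (mul_le_mul_of_nonneg_left (hi j (Finset.mem_univ _)) (norm_nonneg _))
          _ = S * ‖v i‖ := by rw [hS, Finset.sum_mul]
  have h1le : 1 ≤ ‖B‖ * S := by
    rw [← mul_assoc] at key
    nlinarith [key, hvi]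
  have hBpos : 0 < ‖B‖ := by
    by_contra hB
    push_neg at hB
    have : ‖B‖ = 0 := le_antisymm hB (norm_nonneg _)
    rw [this, zero_mul] at h1le; linarith
  rw [inv_le_iff_one_le_mul₀ hBpos]
  linarith [h1le]
end

section
/- Let x_1 < ⋯ < x_n be real with gaps x_{j+1} − x_j ≥ c/√n, and let a, b be real with b ≠ 0. Then |∑_{j=1}^{n} (a − x_j)/((a − x_j)² + b²)| ≤ C·√n·log n for n ≥ 2, with C depending only on c, b, and an upper bound x_n − x_1 ≤ C₀√n. -/
set_option maxHeartbeats 1000000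


open Finset

lemma term_abs_le_one_div_two_abs (t b : ℝ) (hb : b ≠ 0) :
    |t / (t ^ 2 + b ^ 2)| ≤ 1 / (2 * |b|) := by
  have hb' : 0 < |b| := abs_pos.mpr hb
  have hpos : 0 < t ^ 2 + b ^ 2 := by positivity
  rw [abs_div, abs_of_pos hpos, div_le_div_iff₀ hpos (by positivity)]
  nlinarith [sq_abs t, sq_abs b, sq_nonneg (|t| - |b|)]

lemma term_abs_le_inv (t b r : ℝ) (hr : 0 < r) (htr : r ≤ |t|) :
    |t / (t ^ 2 + b ^ 2)| ≤ 1 / r := by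
  have ht : 0 < |t| := lt_of_lt_of_le hr htr
  have hpos : 0 < t ^ 2 + b ^ 2 := by nlinarith [sq_abs t, sq_nonneg b, mul_pos ht ht]
  rw [abs_div, abs_of_pos hpos, div_le_div_iff₀ hpos hr]
  nlinarith [sq_abs t, sq_nonneg b]

lemma gap_growth {n : ℕ} (x : Fin n → ℝ) (d : ℝ) (hd : 0 ≤ d)
    (hgap : ∀ (j : Fin n) (hj : (j:ℕ)+1 < n), x ⟨(j:ℕ)+1, hj⟩ - x j ≥ d) :
    ∀ (k : ℕ) (i j : Fin n), (j:ℕ) = (i:ℕ) + k → x j - x i ≥ k * d := by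
  intro k
  induction k with
  | zero =>
    intro i j h
    have : j = i := Fin.ext (by omega)
    simp [this]
  | succ k ih =>
    intro i j h
    have hk : (i:ℕ) + k < n := by omega
    set j' : Fin n := ⟨(i:ℕ) + k, hk⟩ with hj'
    have h1 : x j' - x i ≥ k * d := ih i j' rfl
    have hj2 : (j' : ℕ) + 1 < n := by simp only [hj']; omega
    have h2 : x ⟨(j':ℕ)+1, hj2⟩ - x j' ≥ d := hgap j' hj2
    have he : (⟨(j':ℕ)+1, hj2⟩ : Fin n) = j := Fin.ext (by simp only [hj']; omega)
    rw [he] at h2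
    push_cast
    nlinarith

lemma harmonic_cast_nonneg (m : ℕ) : (0:ℝ) ≤ (harmonic m : ℝ) := by
  have : (0:ℚ) ≤ harmonic m := Finset.sum_nonneg (by intros; positivity)
  exact_mod_cast this

/-- the step function bound -/
noncomputable def hfun (b d : ℝ) (k : ℕ) : ℝ :=
  if k = 0 then 1 / (2 * |b|) else 1 / (k * d)

lemma hfun_nonneg (b d : ℝ) (hd : 0 < d) (k : ℕ) : 0 ≤ hfun b d k := by
  unfold hfun
  split <;> positivity

lemma sum_hfun_le {n : ℕ} (hn : 1 ≤ n) (b d : ℝ) (hd : 0 < d) :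
    ∑ k ∈ range n, hfun b d k ≤ 1 / (2 * |b|) + (1/d) * (harmonic (n-1) : ℝ) := by
  obtain ⟨m, rfl⟩ : ∃ m, n = m + 1 := ⟨n - 1, by omega⟩
  rw [Finset.sum_range_succ']
  simp only [Nat.add_sub_cancel]
  have h0 : hfun b d 0 = 1 / (2 * |b|) := by simp [hfun]
  rw [h0, add_comm]
  gcongr _ + ?_
  have : ∀ i ∈ range m, hfun b d (i+1) = (1/d) * ((i+1 : ℝ))⁻¹ := by
    intro i _
    simp only [hfun, Nat.succ_ne_zero, if_false]
    push_cast
    rw [one_div, mul_inv, one_div, mul_comm]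
  rw [Finset.sum_congr rfl this, ← Finset.mul_sum]
  have hcast : ((harmonic m : ℚ) : ℝ) = ∑ i ∈ range m, ((i:ℝ)+1)⁻¹ := by
    rw [harmonic]; push_cast; ring
  rw [hcast]

lemma side_sum_le {n : ℕ} (hn : 1 ≤ n) (x : Fin n → ℝ) (a d b : ℝ)
    (hd : 0 < d) (hb : b ≠ 0)
    (hgrow : ∀ i j : Fin n, (i:ℕ) ≤ (j:ℕ) → x j - x i ≥ (((j:ℕ) - (i:ℕ) : ℕ) : ℝ) * d) :
    ∑ j ∈ univ.filter (fun j => a ≤ x j), |(a - x j) / ((a - x j) ^ 2 + b ^ 2)|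
      ≤ 1 / (2 * |b|) + (1/d) * (harmonic (n-1) : ℝ) := by
  set R := univ.filter (fun j : Fin n => a ≤ x j) with hR
  rcases R.eq_empty_or_nonempty with h | hne
  · rw [h, Finset.sum_empty]
    have h1 := harmonic_cast_nonneg (n-1)
    have hb' : 0 < |b| := abs_pos.mpr hb
    positivity
  · set j0 := R.min' hne with hj0
    have hj0R : j0 ∈ R := R.min'_mem hne
    have hj0a : a ≤ x j0 := by
      rw [hR] at hj0R; simpa using (Finset.mem_filter.mp hj0R).2
    have key : ∀ j ∈ R, |(a - x j) / ((a - x j) ^ 2 + b ^ 2)| ≤ hfun b d ((j:ℕ) - (j0:ℕ)) := by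
      intro j hj
      have hle : (j0:ℕ) ≤ (j:ℕ) := Fin.le_iff_val_le_val.mp (R.min'_le j hj)
      by_cases hk : (j:ℕ) - (j0:ℕ) = 0
      · rw [hk]
        simpa [hfun] using term_abs_le_one_div_two_abs (a - x j) b hb
      · have hgap : x j - x j0 ≥ (((j:ℕ) - (j0:ℕ) : ℕ) : ℝ) * d := hgrow j0 j hle
        have hk1 : (1:ℝ) ≤ (((j:ℕ) - (j0:ℕ) : ℕ) : ℝ) := by
          exact_mod_cast Nat.one_le_iff_ne_zero.mpr hk
        have hkd : (0:ℝ) < (((j:ℕ) - (j0:ℕ) : ℕ) : ℝ) * d := by nlinarith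
        have habs : (((j:ℕ) - (j0:ℕ) : ℕ) : ℝ) * d ≤ |a - x j| := by
          apply le_abs.mpr (Or.inr ?_)
          nlinarith
        have := term_abs_le_inv (a - x j) b _ hkd habs
        simpa [hfun, hk] using this
    have hinj : ∀ i ∈ R, ∀ j ∈ R, (i:Fin n).val - j0.val = (j:Fin n).val - j0.val → i = j := by
      intro i hi j hj hij
      have h1 : (j0:ℕ) ≤ (i:ℕ) := Fin.le_iff_val_le_val.mp (R.min'_le i hi)
      have h2 : (j0:ℕ) ≤ (j:ℕ) := Fin.le_iff_val_le_val.mp (R.min'_le j hj)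
      exact Fin.ext (by omega)
    calc ∑ j ∈ R, |(a - x j) / ((a - x j) ^ 2 + b ^ 2)|
        ≤ ∑ j ∈ R, hfun b d ((j:ℕ) - (j0:ℕ)) := Finset.sum_le_sum key
      _ = ∑ k ∈ R.image (fun j : Fin n => (j:ℕ) - (j0:ℕ)), hfun b d k := (Finset.sum_image hinj).symm
      _ ≤ ∑ k ∈ range n, hfun b d k := by
          apply Finset.sum_le_sum_of_subset_of_nonneg
          · intro k hk
            obtain ⟨j, _, rfl⟩ := Finset.mem_image.mp hk
            exact Finset.mem_range.mpr (by have := j.isLt; omega)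
          · intros; exact hfun_nonneg b d hd _
      _ ≤ _ := sum_hfun_le hn b d hd


/-- If `x_1 < ⋯ < x_n` are real with consecutive gaps at least `c/√n` and total spread
`x_n − x_1 ≤ C₀√n`, and `b ≠ 0`, then for `n ≥ 2`,
`|∑_j (a − x_j)/((a − x_j)² + b²)| ≤ C·√n·log n` with `C` depending only on `c`, `b`, `C₀`. -/
theorem abs_sum_shift_div_le (c : ℝ) (hc : 0 < c) (b : ℝ) (hb : b ≠ 0)
    (C₀ : ℝ) (hC₀ : 0 < C₀) :
    ∃ C > 0, ∀ (n : ℕ) (hn : 2 ≤ n) (x : Fin n → ℝ) (a : ℝ), StrictMono x →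
      (∀ (j : Fin n) (hj : (j : ℕ) + 1 < n), x ⟨(j : ℕ) + 1, hj⟩ - x j ≥ c / Real.sqrt n) →
      x ⟨n - 1, by omega⟩ - x ⟨0, by omega⟩ ≤ C₀ * Real.sqrt n →
      |∑ j, (a - x j) / ((a - x j) ^ 2 + b ^ 2)| ≤ C * Real.sqrt n * Real.log n := by
  have hb' : 0 < |b| := abs_pos.mpr hb
  have hl2 : 0 < Real.log 2 := Real.log_pos (by norm_num)
  refine ⟨1/(|b| * Real.log 2) + (2/c) * (1/Real.log 2 + 1), by positivity, ?_⟩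
  intro n hn x a hmono hgap _
  set s := Real.sqrt n with hs
  have hn1 : (1:ℝ) ≤ (n:ℝ) := by exact_mod_cast Nat.one_le_of_lt hn
  have hs0 : 0 ≤ s := Real.sqrt_nonneg _
  have hs2 : s ^ 2 = (n:ℝ) := Real.sq_sqrt (by positivity)
  have hs1 : 1 ≤ s := by nlinarith
  set d := c / s with hd'
  have hd : 0 < d := by positivity
  set L := Real.log n with hL'
  have hL : Real.log 2 ≤ L := Real.log_le_log (by norm_num) (by exact_mod_cast hn)
  have hL0 : 0 < L := lt_of_lt_of_le hl2 hL
  -- growth of gaps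
  have hgrow : ∀ i j : Fin n, (i:ℕ) ≤ (j:ℕ) →
      x j - x i ≥ (((j:ℕ) - (i:ℕ) : ℕ) : ℝ) * d :=
    fun i j h => gap_growth x d hd.le hgap ((j:ℕ) - (i:ℕ)) i j (by omega)
  set f : Fin n → ℝ := fun j => (a - x j) / ((a - x j) ^ 2 + b ^ 2) with hf
  have habs : |∑ j, f j| ≤ ∑ j, |f j| := Finset.abs_sum_le_sum_abs _ _
  have hsplit : ∑ j, |f j| =
      ∑ j ∈ univ.filter (fun j => a ≤ x j), |f j|
      + ∑ j ∈ univ.filter (fun j => ¬ a ≤ x j), |f j| :=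
    (Finset.sum_filter_add_sum_filter_not univ _ _).symm
  -- bound for the right side
  have hright : ∑ j ∈ univ.filter (fun j => a ≤ x j), |f j|
      ≤ 1 / (2 * |b|) + (1/d) * (harmonic (n-1) : ℝ) :=
    side_sum_le (by omega) x a d b hd hb hgrow
  -- reflection for the left side
  set y : Fin n → ℝ := fun j => - x j.rev with hy
  have hgrowy : ∀ i j : Fin n, (i:ℕ) ≤ (j:ℕ) →
      y j - y i ≥ (((j:ℕ) - (i:ℕ) : ℕ) : ℝ) * d := by
    intro i j h
    have h1 : (j.rev : ℕ) ≤ (i.rev : ℕ) := by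
      simp only [Fin.val_rev]; omega
    have h2 := hgrow j.rev i.rev h1
    have h3 : ((i.rev:ℕ) - (j.rev:ℕ) : ℕ) = (j:ℕ) - (i:ℕ) := by
      simp only [Fin.val_rev]; omega
    rw [h3] at h2
    simp only [hy]
    linarith
  have hleft0 := side_sum_le (n := n) (by omega) y (-a) d b hd hb hgrowy
  have hrevsum : ∑ j ∈ univ.filter (fun j : Fin n => -a ≤ y j),
      |(-a - y j) / ((-a - y j) ^ 2 + b ^ 2)|
      = ∑ j ∈ univ.filter (fun j : Fin n => x j ≤ a), |f j| := by
    rw [Finset.sum_filter, Finset.sum_filter]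
    refine Fintype.sum_equiv (Fin.revPerm) _ _ ?_
    intro j
    simp only [hy, Fin.revPerm_apply, Fin.rev_rev, hf]
    set t := x j.rev with ht
    by_cases hxa : t ≤ a
    · rw [if_pos (neg_le_neg_iff.mpr hxa), if_pos hxa]
      have e2 : -a - -t = -(a - t) := by ring
      have e3 : (-(a - t)) ^ 2 = (a - t) ^ 2 := by ring
      rw [e2, e3, abs_div, abs_div, abs_neg]
    · rw [if_neg (fun hh => hxa (neg_le_neg_iff.mp hh)), if_neg hxa]
  have hsub : ∑ j ∈ univ.filter (fun j => ¬ a ≤ x j), |f j|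
      ≤ ∑ j ∈ univ.filter (fun j : Fin n => x j ≤ a), |f j| := by
    apply Finset.sum_le_sum_of_subset_of_nonneg
    · intro j hj
      simp only [Finset.mem_filter, Finset.mem_univ, true_and] at hj ⊢
      linarith [not_le.mp hj]
    · intros; positivity
  have hleft : ∑ j ∈ univ.filter (fun j => ¬ a ≤ x j), |f j|
      ≤ 1 / (2 * |b|) + (1/d) * (harmonic (n-1) : ℝ) := by
    refine hsub.trans ?_
    rw [← hrevsum]
    exact hleft0
  -- harmonic bound
  have hharm : (harmonic (n-1) : ℝ) ≤ 1 + L := by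
    refine (harmonic_le_one_add_log (n-1)).trans ?_
    have : ((n-1 : ℕ) : ℝ) ≤ (n : ℝ) := by
      have : (n-1 : ℕ) ≤ n := Nat.sub_le _ _
      exact_mod_cast this
    have h2 : (0:ℝ) < ((n-1:ℕ):ℝ) := by
      have : 1 ≤ n - 1 := by omega
      exact_mod_cast Nat.lt_of_lt_of_le Nat.zero_lt_one this
    have := Real.log_le_log h2 this
    linarith
  -- put it together
  have hdinv : 1/d = s/c := by
    rw [hd', one_div_div]
  have htot : |∑ j, f j| ≤ 1/|b| + (2/c) * s * (1 + L) := by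
    have hnn : 0 ≤ (1:ℝ)/d := by positivity
    have h1 : (1/d) * (harmonic (n-1) : ℝ) ≤ (s/c) * (1 + L) := by
      rw [hdinv]
      apply mul_le_mul_of_nonneg_left hharm (by positivity)
    calc |∑ j, f j| ≤ ∑ j, |f j| := habs
      _ = _ := hsplit
      _ ≤ (1 / (2 * |b|) + (1/d) * (harmonic (n-1) : ℝ))
          + (1 / (2 * |b|) + (1/d) * (harmonic (n-1) : ℝ)) := add_le_add hright hleft
      _ ≤ (1 / (2 * |b|) + (s/c) * (1 + L)) + (1 / (2 * |b|) + (s/c) * (1 + L)) := by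
          linarith
      _ = 1/|b| + (2/c) * s * (1 + L) := by
          field_simp
          ring
  refine htot.trans ?_
  have h1 : 1/|b| ≤ 1/(|b| * Real.log 2) * (s * L) := by
    rw [div_mul_eq_mul_div, one_mul, div_le_div_iff₀ hb' (by positivity)]
    have hsl : Real.log 2 ≤ s * L := by nlinarith
    nlinarith [mul_le_mul_of_nonneg_right hsl hb'.le]
  have h2 : (2/c) * s * (1 + L) ≤ (2/c) * (1/Real.log 2 + 1) * (s * L) := by
    have key : 1 + L ≤ (1/Real.log 2 + 1) * L := by
      have : 1 ≤ L / Real.log 2 := (one_le_div hl2).mpr hL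
      have expand : (1/Real.log 2 + 1) * L = L / Real.log 2 + L := by ring
      rw [expand]
      nlinarith
    calc (2/c) * s * (1 + L) ≤ (2/c) * s * ((1/Real.log 2 + 1) * L) := by
          apply mul_le_mul_of_nonneg_left key (by positivity)
      _ = (2/c) * (1/Real.log 2 + 1) * (s * L) := by ring
  calc 1/|b| + (2/c) * s * (1 + L)
      ≤ 1/(|b| * Real.log 2) * (s * L) + (2/c) * (1/Real.log 2 + 1) * (s * L) :=
        add_le_add h1 h2
    _ = (1/(|b| * Real.log 2) + (2/c) * (1/Real.log 2 + 1)) * s * L := by ring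
end
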